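/- Let A be an associative unital ℂ-algebra with the elements and relations described. Then for all s, t, c ∈ ℕ one has [X⁺_t, X_s^{−(c)}] = X_s^{−(c−1)}·J_{s+t}^⟨1⟩ − X_s^{−(c−2)}·X_s^{−((1);s+t)}, where J_m^⟨1⟩ := J_m − Q·J_{m+1} and X_s^{−(b)} := 0 for integers b < 0. -/

import Mathlib

/-!
Writing `h = ⁅x, y⁆` and `d = ⁅h, y⁆`, the Leibniz rule gives
`⁅x, yⁿ⁆ = n yⁿ⁻¹ h + C(n, 2) yⁿ⁻² d` as soon as `d` commutes with `y`; dividing by `n!` turns this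
into `⁅x, y⁽ᶜ⁾⁆ = y⁽ᶜ⁻¹⁾ h + ½ y⁽ᶜ⁻²⁾ d`. For `x = X⁺_t`, `y = X⁻_s`, relation (L3) gives
`h = J_{s+t} - Q J_{s+t+1}`, and (L2) gives `d = -2 X_s^{-((1);s+t)}`, which commutes with `y` by (L4).
-/

open Finset

/-- `X_t^{±((p);h)}`: for `p > 0`, `Σ_{w=0}^{p} C(p,w)·(−Q)^w·X_{t+p·h+w}`; for `p = 0`, `1`. -/
noncomputable def Xbr {A : Type*} [Ring A] [Algebra ℂ A] (Q : ℂ) (X : ℕ → A) (t p h : ℕ) : A :=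
  if p = 0 then 1
  else ∑ w ∈ Finset.range (p + 1), ((p.choose w : ℂ) * (-Q) ^ w) • X (t + p * h + w)

/-- Divided power `X_t^{(b)} = (X_t)^b / b!` for `b ≥ 0`, and `0` for `b < 0`. -/
noncomputable def Xdiv {A : Type*} [Ring A] [Algebra ℂ A] (X : ℕ → A) (t : ℕ) (b : ℤ) : A :=
  if b < 0 then 0 else ((b.toNat.factorial : ℂ))⁻¹ • X t ^ b.toNat

section Commutator

variable {R : Type*} [Ring R]

theorem lie_pow_succ (x y : R) (n : ℕ) : ⁅x, y ^ (n + 1)⁆ = ⁅x, y ^ n⁆ * y + y ^ n * ⁅x, y⁆ := by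
  simp only [Ring.lie_def, pow_succ]
  noncomm_ring

theorem lie_pow_add_two_of_commute {x y : R} (hy : Commute ⁅⁅x, y⁆, y⁆ y) (n : ℕ) :
    ⁅x, y ^ (n + 2)⁆ =
      (n + 2) • (y ^ (n + 1) * ⁅x, y⁆) + (n + 2).choose 2 • (y ^ n * ⁅⁅x, y⁆, y⁆) := by
  have swap : ⁅x, y⁆ * y = y * ⁅x, y⁆ + ⁅⁅x, y⁆, y⁆ := by
    rw [Ring.lie_def ⁅x, y⁆]; abel
  induction n with
  | zero =>
    rw [lie_pow_succ, pow_one, swap]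
    simp only [zero_add, Nat.choose_self, pow_zero, one_mul, one_smul]
    abel
  | succ n ih =>
    rw [lie_pow_succ, ih, add_mul, smul_mul_assoc, smul_mul_assoc, mul_assoc, swap, mul_assoc,
      hy.eq, mul_add, ← mul_assoc, ← mul_assoc, ← pow_succ, ← pow_succ, Nat.choose_succ_succ (n + 2)]
    simp only [Nat.choose_one_right]
    module

end Commutator

section DividedPowers

variable {A : Type*} [Ring A] [Algebra ℂ A] (X : ℕ → A) (t : ℕ)

theorem Xdiv_natCast (n : ℕ) : Xdiv X t n = ((n.factorial : ℂ))⁻¹ • X t ^ n := by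
  simp [Xdiv]

theorem Xdiv_of_neg {b : ℤ} (hb : b < 0) : Xdiv X t b = 0 := if_pos hb

theorem Xbr_one (Q : ℂ) (h : ℕ) : Xbr Q X t 1 h = X (t + h) - Q • X (t + h + 1) := by
  simp [Xbr, Finset.sum_range_succ, sub_eq_add_neg]

variable {X t}

theorem lie_Xdiv_of_commute {x : A} (hx : Commute ⁅⁅x, X t⁆, X t⁆ (X t)) (c : ℕ) :
    ⁅x, Xdiv X t c⁆ =
      Xdiv X t (c - 1) * ⁅x, X t⁆ + (2 : ℂ)⁻¹ • (Xdiv X t (c - 2) * ⁅⁅x, X t⁆, X t⁆) := by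
  obtain _ | _ | c := c
  · simp [Xdiv, Ring.lie_def]
  · simp [Xdiv]
  · rw [show ((c + 2 : ℕ) : ℤ) - 1 = (c + 1 : ℕ) by omega, show ((c + 2 : ℕ) : ℤ) - 2 = c by omega,
      Xdiv_natCast, Xdiv_natCast, Xdiv_natCast, Ring.lie_def, mul_smul_comm, smul_mul_assoc,
      ← smul_sub, ← Ring.lie_def, lie_pow_add_two_of_commute hx, Nat.factorial_succ,
      Nat.factorial_succ, ← Nat.cast_smul_eq_nsmul ℂ, ← Nat.cast_smul_eq_nsmul ℂ]
    simp only [smul_mul_assoc]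
    have : (c.factorial : ℂ) ≠ 0 := by exact_mod_cast c.factorial_ne_zero
    have : (c : ℂ) + 1 ≠ 0 := by norm_cast
    have : (c : ℂ) + 1 + 1 ≠ 0 := by norm_cast
    match_scalars <;> push_cast [Nat.cast_choose_two] <;> field_simp <;> ring

end DividedPowers

theorem stmt3 {A : Type*} [Ring A] [Algebra ℂ A] (Q : ℂ) (Xp Xm J : ℕ → A)
    (hL2m : ∀ s t, J s * Xm t - Xm t * J s = -((2 : ℂ) • Xm (s + t)))
    (hL3 : ∀ s t, Xp t * Xm s - Xm s * Xp t = J (s + t) - Q • J (s + t + 1))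
    (hL4m : ∀ s t, Xm t * Xm s = Xm s * Xm t)
    (s t c : ℕ) :
    Xp t * Xdiv Xm s (c : ℤ) - Xdiv Xm s (c : ℤ) * Xp t =
      Xdiv Xm s ((c : ℤ) - 1) * (J (s + t) - Q • J (s + t + 1)) -
        Xdiv Xm s ((c : ℤ) - 2) * Xbr Q Xm s 1 (s + t) := by
  have lie_Xp : ⁅Xp t, Xm s⁆ = J (s + t) - Q • J (s + t + 1) := hL3 s t
  have lie_lie_Xp : ⁅⁅Xp t, Xm s⁆, Xm s⁆ = (-2 : ℂ) • Xbr Q Xm s 1 (s + t) := by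
    calc ⁅⁅Xp t, Xm s⁆, Xm s⁆
        = ⁅J (s + t), Xm s⁆ - Q • ⁅J (s + t + 1), Xm s⁆ := by
          simp only [lie_Xp, Ring.lie_def, sub_mul, mul_sub, smul_mul_assoc, mul_smul_comm]
          module
      _ = _ := by
          rw [Ring.lie_def, Ring.lie_def, hL2m, hL2m, Xbr_one, add_comm (s + t) s,
            show s + t + 1 + s = s + (s + t) + 1 by omega]
          module
  have commute_Xm : Commute ⁅⁅Xp t, Xm s⁆, Xm s⁆ (Xm s) := by
    rw [lie_lie_Xp, Xbr_one]
    have commute_Xm_s (k : ℕ) : Commute (Xm k) (Xm s) := hL4m s k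
    exact ((commute_Xm_s _).sub_left ((commute_Xm_s _).smul_left Q)).smul_left _
  rw [← Ring.lie_def, lie_Xdiv_of_commute commute_Xm, lie_lie_Xp, lie_Xp, mul_smul_comm, smul_smul]
  module
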